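/- Let $Y_1,\dots,Y_N$ be independent and identically distributed real-valued random variables with common law $\mu$. For any $\epsilon \in (0,1)$ and $\beta \in (0,1)$, if $N \ge \log \beta / \log(1-\epsilon)$, then with probability at least $1-\beta$ (over the draw of the samples) the random threshold $\max_{1\le i\le N} Y_i$ satisfies $\mu\big((-\infty, \max_{1\le i\le N} Y_i]\big) \ge 1-\epsilon$; i.e. $\mathbb{P}\{\omega : \mu((-\infty, \max_i Y_i(\omega)]) \ge 1-\epsilon\} \ge 1-\beta$. -/

import Mathlib

open MeasureTheory ProbabilityTheory Set Filter

/-! The `(1 - ε)`-quantile `t` of `μ` has `μ (-∞, t) ≤ 1 - ε ≤ μ (-∞, t]`. The threshold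
`max_i Y i` falls below `1 - ε` only if every sample lands in `(-∞, t)`, which by independence
has probability at most `(1 - ε) ^ N ≤ β`. -/

lemma exists_measure_Iio_le_le_measure_Iic (μ : Measure ℝ) [IsProbabilityMeasure μ] {p : ℝ}
    (hp₀ : 0 < p) (hp₁ : p < 1) :
    ∃ t, μ (Iio t) ≤ ENNReal.ofReal p ∧ ENNReal.ofReal p ≤ μ (Iic t) := by
  set S := {x | p ≤ cdf μ x}
  have hS : S.Nonempty :=
    ((tendsto_cdf_atTop μ).eventually (eventually_gt_nhds hp₁)).exists.imp fun _ h => h.le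
  have hS_bdd : BddBelow S := by
    obtain ⟨x₀, hx₀⟩ := ((tendsto_cdf_atBot μ).eventually (eventually_lt_nhds hp₀)).exists
    exact ⟨x₀, fun y hy => le_of_not_gt fun hyx => (hy.trans (monotone_cdf μ hyx.le)).not_gt hx₀⟩
  refine ⟨sInf S, ?_, ?_⟩
  · rw [← measure_cdf μ, StieltjesFunction.measure_Iio _ (tendsto_cdf_atBot μ), sub_zero]
    refine ENNReal.ofReal_le_ofReal (le_of_tendsto ((monotone_cdf μ).tendsto_leftLim _) ?_)
    filter_upwards [self_mem_nhdsWithin] with x hx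
    exact le_of_not_ge fun h => (csInf_le hS_bdd h).not_gt hx
  · rw [← ofReal_cdf]
    refine ENNReal.ofReal_le_ofReal
      (ge_of_tendsto (((cdf μ).right_continuous _).mono Ioi_subset_Ici_self).tendsto ?_)
    filter_upwards [self_mem_nhdsWithin] with x hx
    obtain ⟨y, hyS, hyx⟩ := (csInf_lt_iff hS_bdd hS).1 hx
    exact hyS.trans (monotone_cdf μ hyx.le)

lemma pow_le_of_log_div_log_le {q β : ℝ} {N : ℕ} (hq₀ : 0 < q) (hq₁ : q < 1) (hβ : 0 < β)
    (hN : Real.log β / Real.log q ≤ N) : q ^ N ≤ β := by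
  rw [← Real.log_le_log_iff (pow_pos hq₀ N) hβ, Real.log_pow]
  exact (div_le_iff_of_neg (Real.log_neg hq₀ hq₁)).1 hN

lemma ProbabilityTheory.iIndepFun.measure_iInter_preimage_eq_pow {Ω ι β : Type*} [MeasurableSpace Ω]
    [MeasurableSpace β] [Fintype ι] {P : Measure Ω} {μ : Measure β} {Y : ι → Ω → β}
    (hindep : iIndepFun Y P) (hY : ∀ i, AEMeasurable (Y i) P) (hlaw : ∀ i, P.map (Y i) = μ)
    {s : Set β} (hs : MeasurableSet s) :
    P (⋂ i, Y i ⁻¹' s) = μ s ^ Fintype.card ι := by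
  rw [hindep.meas_iInter fun i => ⟨s, hs, rfl⟩, ← Finset.card_univ, ← Finset.prod_const]
  refine Finset.prod_congr rfl fun i _ => ?_
  rw [← hlaw i, Measure.map_apply_of_aemeasurable (hY i) hs]

lemma one_sub_measure_le_measure_compl {Ω : Type*} [MeasurableSpace Ω] (P : Measure Ω)
    [IsProbabilityMeasure P] (s : Set Ω) : 1 - P s ≤ P sᶜ :=
  tsub_le_iff_left.2 (measure_univ (μ := P) ▸ measure_univ_le_add_compl s)

theorem max_sample_quantile_bound_general
    {Ω : Type*} [MeasurableSpace Ω] (P : Measure Ω) [IsProbabilityMeasure P]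
    (N : ℕ) (Y : Fin N → Ω → ℝ) (μ : Measure ℝ) [IsProbabilityMeasure μ]
    (hindep : iIndepFun Y P)
    (hlaw : ∀ i, Measure.map (Y i) P = μ)
    (ε β : ℝ) (hε : ε ∈ Set.Ioo (0 : ℝ) 1) (hβ : β ∈ Set.Ioo (0 : ℝ) 1)
    (hN : Real.log β / Real.log (1 - ε) ≤ (N : ℝ)) :
    ENNReal.ofReal (1 - β) ≤
      P {ω | ENNReal.ofReal (1 - ε) ≤ μ (Set.Iic (⨆ i, Y i ω))} := by
  obtain ⟨hε₀, hε₁⟩ := hε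
  obtain ⟨t, hIio, hIic⟩ :=
    exists_measure_Iio_le_le_measure_Iic μ (sub_pos.2 hε₁) (sub_lt_self 1 hε₀)
  set C := ⋂ i, Y i ⁻¹' Iio t
  have hY : ∀ i, AEMeasurable (Y i) P := fun i =>
    AEMeasurable.of_map_ne_zero (hlaw i ▸ IsProbabilityMeasure.ne_zero μ)
  have hC : P C ≤ ENNReal.ofReal β := calc
    P C = μ (Iio t) ^ N := by
      simpa using hindep.measure_iInter_preimage_eq_pow hY hlaw measurableSet_Iio
    _ ≤ ENNReal.ofReal (1 - ε) ^ N := by gcongr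
    _ = ENNReal.ofReal ((1 - ε) ^ N) := (ENNReal.ofReal_pow (sub_pos.2 hε₁).le N).symm
    _ ≤ ENNReal.ofReal β := ENNReal.ofReal_le_ofReal
      (pow_le_of_log_div_log_le (sub_pos.2 hε₁) (sub_lt_self 1 hε₀) hβ.1 hN)
  have hgood : Cᶜ ⊆ {ω | ENNReal.ofReal (1 - ε) ≤ μ (Iic (⨆ i, Y i ω))} := by
    intro ω hω
    obtain ⟨i, hi⟩ : ∃ i, t ≤ Y i ω := by simpa [C] using hω
    exact hIic.trans (measure_mono (Iic_subset_Iic.2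
      (hi.trans (le_ciSup (finite_range fun j => Y j ω).bddAbove i))))
  calc ENNReal.ofReal (1 - β) = 1 - ENNReal.ofReal β := by
        rw [ENNReal.ofReal_sub _ hβ.1.le, ENNReal.ofReal_one]
    _ ≤ 1 - P C := tsub_le_tsub_left hC 1
    _ ≤ P Cᶜ := one_sub_measure_le_measure_compl P C
    _ ≤ _ := measure_mono hgood

/-- **Lemma 1 (Theorem 8.1 in Tempo et al.)**: for i.i.d. real samples `Y 1, ..., Y N` with
common law `μ`, if `N ≥ log β / log (1 - ε)` then with probability at least `1 - β` the random
threshold `max_i Y i` satisfies `μ (-∞, max_i Y i] ≥ 1 - ε`. -/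
theorem max_sample_quantile_bound
    {Ω : Type*} [MeasurableSpace Ω] (P : Measure Ω) [IsProbabilityMeasure P]
    (N : ℕ) (Y : Fin N → Ω → ℝ) (μ : Measure ℝ) [IsProbabilityMeasure μ]
    (hmeas : ∀ i, Measurable (Y i))
    (hindep : iIndepFun Y P)
    (hlaw : ∀ i, Measure.map (Y i) P = μ)
    (ε β : ℝ) (hε : ε ∈ Set.Ioo (0 : ℝ) 1) (hβ : β ∈ Set.Ioo (0 : ℝ) 1)
    (hN : Real.log β / Real.log (1 - ε) ≤ (N : ℝ)) :
    ENNReal.ofReal (1 - β) ≤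
      P {ω | ENNReal.ofReal (1 - ε) ≤ μ (Set.Iic (⨆ i, Y i ω))} :=
  max_sample_quantile_bound_general P N Y μ hindep hlaw ε β hε hβ hN
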